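/- Let n ∈ ℕ and for 0 ≤ k ≤ n let F_k be a left-continuous integrable BV function, F_k(x) = ν_k((−∞,x)). Set L = Σ_{k=0}^n ‖ν_k‖ · (‖F_k‖_{L¹} + ‖ν_k‖). Then for every finite signed measure μ on ℝ with total variation norm ‖μ‖ ≤ 1, Σ_{k=0}^n ∫_ℝ (F_k*μ)(x)² dx ≤ L · ‖μ‖_BL. -/

import Mathlib

/-!
Write `φ = F * μ` and `G(y) = ∫ φ(x) F(x - y) dx`. By Fubini, `∫ φ² = ∫ G dμ`, so it suffices
to show that `G / (‖ν‖ (‖F‖₁ + ‖ν‖))` is a test function for the bounded Lipschitz norm.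
Since `|F| ≤ ‖ν‖` and `‖μ‖ ≤ 1` we get `|φ| ≤ ‖ν‖`, hence `|G| ≤ ‖ν‖ ‖F‖₁`. The increment
`F(x - y) - F(x - z)` is `±ν` of an interval of length `|y - z|`, so by Tonelli
`∫ |F(x - y) - F(x - z)| dx ≤ ‖ν‖ |y - z|` and `G` is `‖ν‖²`-Lipschitz. Finally `G` vanishes at
infinity, being the convolution of two bounded integrable functions.
-/

open MeasureTheory Filter ZeroAtInfty

/-- Integral of a real function against a finite signed measure,
via the Jordan decomposition. -/
noncomputable def sint (μ : MeasureTheory.SignedMeasure ℝ) (f : ℝ → ℝ) : ℝ :=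
  ∫ x, f x ∂μ.toJordanDecomposition.posPart - ∫ x, f x ∂μ.toJordanDecomposition.negPart

/-- The total variation norm `‖μ‖` of a finite signed measure. -/
noncomputable def tvNorm (μ : MeasureTheory.SignedMeasure ℝ) : ℝ :=
  (μ.totalVariation Set.univ).toReal

/-- A test function for the bounded Lipschitz (Dudley) norm: `f ∈ C₀(ℝ)` with
`‖f‖_∞ + Lip(f) ≤ 1`. -/
def BLtest (f : C₀(ℝ, ℝ)) : Prop := ∃ K : NNReal, LipschitzWith K f ∧ ‖f‖ + (K : ℝ) ≤ 1

/-- The bounded Lipschitz (Dudley) norm `‖μ‖_BL` of a finite signed measure. -/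
noncomputable def blNorm (μ : MeasureTheory.SignedMeasure ℝ) : ℝ :=
  sSup {r | ∃ f : C₀(ℝ, ℝ), BLtest f ∧ r = sint μ f}

namespace MeasureTheory.SignedMeasure

variable {α : Type*} [MeasurableSpace α]

theorem apply_eq_posPart_sub_negPart (ν : SignedMeasure α) {s : Set α} (hs : MeasurableSet s) :
    ν s = (ν.toJordanDecomposition.posPart s).toReal
      - (ν.toJordanDecomposition.negPart s).toReal := by
  conv_lhs => rw [← ν.toSignedMeasure_toJordanDecomposition]
  exact Measure.toSignedMeasure_sub_apply hs

theorem totalVariation_toReal_eq (ν : SignedMeasure α) (s : Set α) :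
    (ν.totalVariation s).toReal = (ν.toJordanDecomposition.posPart s).toReal
      + (ν.toJordanDecomposition.negPart s).toReal :=
  ENNReal.toReal_add (measure_ne_top _ _) (measure_ne_top _ _)

theorem abs_apply_le_totalVariation (ν : SignedMeasure α) {s : Set α} (hs : MeasurableSet s) :
    |ν s| ≤ (ν.totalVariation s).toReal := by
  rw [apply_eq_posPart_sub_negPart ν hs, totalVariation_toReal_eq]
  exact (abs_sub _ _).trans_eq (by simp only [ENNReal.abs_toReal])

end MeasureTheory.SignedMeasure

open SignedMeasure Topology

theorem tvNorm_nonneg (μ : SignedMeasure ℝ) : 0 ≤ tvNorm μ := ENNReal.toReal_nonneg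

section DistributionFunction

variable {ν : SignedMeasure ℝ} {F : ℝ → ℝ}

theorem measurable_of_eq_apply_Iio (hF : ∀ x, F x = ν (Set.Iio x)) : Measurable F := by
  have hmono (τ : Measure ℝ) [IsFiniteMeasure τ] : Monotone fun x => (τ (Set.Iio x)).toReal :=
    fun _ _ hab => ENNReal.toReal_mono (measure_ne_top τ _) (measure_mono (Set.Iio_subset_Iio hab))
  have hF' : F = fun x => (ν.toJordanDecomposition.posPart (Set.Iio x)).toReal
      - (ν.toJordanDecomposition.negPart (Set.Iio x)).toReal := by
    funext x; rw [hF, apply_eq_posPart_sub_negPart ν measurableSet_Iio]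
  rw [hF']
  exact (hmono _).measurable.sub (hmono _).measurable

theorem abs_le_tvNorm_of_eq_apply_Iio (hF : ∀ x, F x = ν (Set.Iio x)) (x : ℝ) :
    |F x| ≤ tvNorm ν := by
  rw [hF]
  exact (abs_apply_le_totalVariation ν measurableSet_Iio).trans
    (ENNReal.toReal_mono (measure_ne_top _ _) (measure_mono (Set.subset_univ _)))

theorem sub_eq_apply_Ico_of_eq_apply_Iio (hF : ∀ x, F x = ν (Set.Iio x)) {s t : ℝ} (hst : s ≤ t) :
    F t - F s = ν (Set.Ico s t) := by
  rw [hF, hF, ← Set.Iio_union_Ico_eq_Iio hst,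
    VectorMeasure.of_union ((Set.Iio_disjoint_Ici le_rfl).mono_right Set.Ico_subset_Ici_self)
      measurableSet_Iio measurableSet_Ico]
  ring

end DistributionFunction

theorem lintegral_measure_Ico_sub (τ : Measure ℝ) [SFinite τ] (a b : ℝ) :
    ∫⁻ u, τ (Set.Ico (u - b) (u - a)) = ENNReal.ofReal (b - a) * τ Set.univ := by
  set S : Set (ℝ × ℝ) := {p | p.2 ∈ Set.Ico (p.1 - b) (p.1 - a)}
  have hS : MeasurableSet S :=
    (measurableSet_le (measurable_fst.sub_const _) measurable_snd).inter
      (measurableSet_lt measurable_snd (measurable_fst.sub_const _))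
  have hslice (t : ℝ) : (fun u => (u, t)) ⁻¹' S = Set.Ioc (t + a) (t + b) := by
    ext u; simp only [S, Set.mem_preimage, Set.mem_ofPred_eq, Set.mem_Ico, Set.mem_Ioc]
    constructor <;> rintro ⟨h₁, h₂⟩ <;> constructor <;> linarith
  calc ∫⁻ u, τ (Set.Ico (u - b) (u - a)) = (volume.prod τ) S := (Measure.prod_apply hS).symm
    _ = ∫⁻ t, volume (Set.Ioc (t + a) (t + b)) ∂τ := by
      rw [Measure.prod_apply_symm hS]; simp_rw [hslice]
    _ = ENNReal.ofReal (b - a) * τ Set.univ := by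
      simp_rw [Real.volume_Ioc, add_sub_add_left_eq_sub, lintegral_const]

theorem integral_abs_sub_comp_sub_le {ν : SignedMeasure ℝ} {F : ℝ → ℝ}
    (hF : ∀ x, F x = ν (Set.Iio x)) (hFi : Integrable F) (a b : ℝ) :
    ∫ u, |F (u - a) - F (u - b)| ≤ tvNorm ν * |b - a| := by
  wlog hab : a ≤ b generalizing a b
  · simpa only [abs_sub_comm] using this b a (le_of_not_ge hab)
  have hpointwise (u : ℝ) :
      ENNReal.ofReal |F (u - a) - F (u - b)| ≤ ν.totalVariation (Set.Ico (u - b) (u - a)) := by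
    rw [sub_eq_apply_Ico_of_eq_apply_Iio hF (by linarith),
      ← ENNReal.ofReal_toReal (measure_ne_top _ _)]
    exact ENNReal.ofReal_le_ofReal (abs_apply_le_totalVariation ν measurableSet_Ico)
  have hint : Integrable fun u => |F (u - a) - F (u - b)| :=
    ((hFi.comp_sub_right a).sub (hFi.comp_sub_right b)).abs
  rw [integral_eq_lintegral_of_nonneg_ae (.of_forall fun _ => abs_nonneg _)
    hint.aestronglyMeasurable, abs_of_nonneg (sub_nonneg.2 hab), tvNorm, mul_comm,
    ← ENNReal.toReal_ofReal (sub_nonneg.2 hab), ← ENNReal.toReal_mul,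
    ← lintegral_measure_Ico_sub]
  exact ENNReal.toReal_mono (by simp [lintegral_measure_Ico_sub, ENNReal.mul_eq_top])
    (lintegral_mono hpointwise)

section SignedIntegral

variable (μ : SignedMeasure ℝ)

theorem tvNorm_eq_posPart_add_negPart :
    tvNorm μ = (μ.toJordanDecomposition.posPart Set.univ).toReal
      + (μ.toJordanDecomposition.negPart Set.univ).toReal :=
  totalVariation_toReal_eq μ Set.univ

theorem sint_const_mul (c : ℝ) (f : ℝ → ℝ) : sint μ (fun y => c * f y) = c * sint μ f := by
  simp only [sint, integral_const_mul, mul_sub]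

theorem abs_sint_le {f : ℝ → ℝ} {C : ℝ} (hf : ∀ y, |f y| ≤ C) : |sint μ f| ≤ C * tvNorm μ := by
  have hpos := norm_integral_le_of_norm_le_const (μ := μ.toJordanDecomposition.posPart) (f := f)
    (.of_forall fun y => (hf y : ‖f y‖ ≤ C))
  have hneg := norm_integral_le_of_norm_le_const (μ := μ.toJordanDecomposition.negPart) (f := f)
    (.of_forall fun y => (hf y : ‖f y‖ ≤ C))
  rw [tvNorm_eq_posPart_add_negPart, mul_add]
  exact (abs_sub _ _).trans (add_le_add (by simpa [measureReal_def] using hpos)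
    (by simpa [measureReal_def] using hneg))

theorem blNorm_bddAbove : BddAbove {r | ∃ f : C₀(ℝ, ℝ), BLtest f ∧ r = sint μ f} := by
  refine ⟨tvNorm μ, ?_⟩
  rintro _ ⟨f, ⟨K, -, hK⟩, rfl⟩
  have hf (y : ℝ) : |f y| ≤ 1 := by
    rw [← Real.norm_eq_abs, ← ZeroAtInftyContinuousMap.norm_toBCF_eq_norm] at *
    exact (f.toBCF.norm_coe_le_norm y).trans (by linarith [K.coe_nonneg])
  simpa using (le_abs_self _).trans (abs_sint_le μ hf)

theorem blNorm_nonneg : 0 ≤ blNorm μ :=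
  le_csSup (blNorm_bddAbove μ) ⟨0, ⟨0, LipschitzWith.const 0, by simp⟩, by simp [sint]⟩

theorem sint_le_mul_blNorm (f : C₀(ℝ, ℝ)) {K : NNReal} (hf : LipschitzWith K f) :
    sint μ f ≤ (‖f‖ + K) * blNorm μ := by
  rcases (add_nonneg (norm_nonneg f) K.coe_nonneg).eq_or_lt with hc | hc
  · have hf0 : f = 0 := norm_eq_zero.1 (by linarith [K.coe_nonneg, norm_nonneg f])
    rw [← hc, zero_mul]
    simp [hf0, sint]
  set c := ‖f‖ + K
  have htest : BLtest (c⁻¹ • f) := by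
    refine ⟨‖c⁻¹‖₊ * K, (lipschitzWith_smul c⁻¹).comp hf, ?_⟩
    simp only [norm_smul, NNReal.coe_mul, coe_nnnorm, Real.norm_eq_abs, abs_inv, abs_of_pos hc]
    rw [← mul_add, inv_mul_cancel₀ hc.ne']
  have hscale : sint μ f = c * sint μ (c⁻¹ • f) := by
    rw [← sint_const_mul]
    congr 1; funext y
    simp [mul_inv_cancel_left₀ hc.ne']
  rw [hscale]
  exact mul_le_mul_of_nonneg_left (le_csSup (blNorm_bddAbove μ) ⟨_, htest, rfl⟩) hc.le

theorem sint_le_mul_blNorm_of_lipschitzWith {G : ℝ → ℝ} {K : NNReal} {b : ℝ}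
    (hG : LipschitzWith K G) (hG0 : Tendsto G (cocompact ℝ) (𝓝 0)) (hb : ∀ y, |G y| ≤ b) :
    sint μ G ≤ (b + K) * blNorm μ := by
  let f : C₀(ℝ, ℝ) := ⟨⟨G, hG.continuous⟩, hG0⟩
  have hnorm : ‖f‖ ≤ b := by
    rw [← ZeroAtInftyContinuousMap.norm_toBCF_eq_norm,
      BoundedContinuousFunction.norm_le ((abs_nonneg _).trans (hb 0))]
    exact hb
  calc sint μ G = sint μ f := rfl
    _ ≤ (‖f‖ + K) * blNorm μ := sint_le_mul_blNorm μ f hG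
    _ ≤ (b + K) * blNorm μ := by gcongr; exact blNorm_nonneg μ

end SignedIntegral

section Convolution

variable {φ F : ℝ → ℝ} {M : ℝ}

theorem integrable_comp_sub_prod (hFm : Measurable F) (hFi : Integrable F)
    (τ : Measure ℝ) [IsFiniteMeasure τ] :
    Integrable (fun z : ℝ × ℝ => F (z.1 - z.2)) (volume.prod τ) := by
  have hm : AEStronglyMeasurable (fun z : ℝ × ℝ => F (z.1 - z.2)) (volume.prod τ) :=
    (hFm.comp (measurable_fst.sub measurable_snd)).aestronglyMeasurable
  refine (integrable_prod_iff' hm).2 ⟨.of_forall fun y => hFi.comp_sub_right y, ?_⟩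
  exact (integrable_const (∫ x, ‖F x‖)).congr
    (.of_forall fun y => (integral_sub_right_eq_self (fun u => ‖F u‖) y).symm)

theorem integrable_sint_comp_sub (hFm : Measurable F) (hFi : Integrable F) (μ : SignedMeasure ℝ) :
    Integrable fun x => sint μ fun y => F (x - y) :=
  (integrable_comp_sub_prod hFm hFi _).integral_prod_left.sub
    (integrable_comp_sub_prod hFm hFi _).integral_prod_left

theorem abs_integral_mul_le (hφ : ∀ x, |φ x| ≤ M) {g : ℝ → ℝ}
    (hg : Integrable g) : |∫ x, φ x * g x| ≤ M * ∫ x, |g x| := by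
  rw [← integral_const_mul M, ← Real.norm_eq_abs]
  refine norm_integral_le_of_norm_le (hg.abs.const_mul M) (.of_forall fun x => ?_)
  rw [Real.norm_eq_abs, abs_mul]
  exact mul_le_mul_of_nonneg_right (hφ x) (abs_nonneg _)

theorem integral_mul_sint_comp_sub (hφm : AEStronglyMeasurable φ) (hφ : ∀ x, |φ x| ≤ M)
    (hFm : Measurable F) (hFi : Integrable F) (μ : SignedMeasure ℝ) :
    ∫ x, φ x * sint μ (fun y => F (x - y)) = sint μ fun y => ∫ x, φ x * F (x - y) := by
  have hprod (τ : Measure ℝ) [IsFiniteMeasure τ] :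
      Integrable (fun z : ℝ × ℝ => φ z.1 * F (z.1 - z.2)) (volume.prod τ) :=
    (integrable_comp_sub_prod hFm hFi τ).bdd_mul (hφm.comp_fst)
      (.of_forall fun z => (hφ z.1 : ‖φ z.1‖ ≤ M))
  have hswap (τ : Measure ℝ) [IsFiniteMeasure τ] :
      ∫ x, φ x * ∫ y, F (x - y) ∂τ = ∫ y, (∫ x, φ x * F (x - y)) ∂τ := by
    simp_rw [← integral_const_mul]
    exact integral_integral_swap (f := fun x y => φ x * F (x - y)) (hprod τ)
  have hint (τ : Measure ℝ) [IsFiniteMeasure τ] : Integrable fun x => φ x * ∫ y, F (x - y) ∂τ := by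
    simpa only [integral_const_mul] using (hprod τ).integral_prod_left
  simp only [sint, mul_sub]
  rw [integral_sub (hint _) (hint _), hswap, hswap]

theorem tendsto_integral_indicator_le_abs (hφi : Integrable φ) :
    Tendsto (fun r => ∫ x, {x | r ≤ |x|}.indicator (fun x => |φ x|) x) atTop (𝓝 0) := by
  have h := tendsto_integral_filter_of_dominated_convergence (μ := volume)
    (F := fun r x => {x | r ≤ |x|}.indicator (fun x => |φ x|) x) (f := fun _ => 0) (fun x => |φ x|)
    (.of_forall fun r => (hφi.abs.indicator (measurableSet_le measurable_const
      continuous_abs.measurable)).aestronglyMeasurable)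
    (.of_forall fun r => .of_forall fun x => by
      rw [Real.norm_eq_abs, abs_of_nonneg (Set.indicator_nonneg (fun _ _ => abs_nonneg _) _)]
      exact Set.indicator_le_self' (fun _ _ => abs_nonneg _) x)
    hφi.abs (.of_forall fun x => tendsto_const_nhds.congr' ((eventually_gt_atTop |x|).mono
      fun r hr => (Set.indicator_of_notMem (s := {x | r ≤ |x|}) (not_le.2 hr) _).symm))
  simpa using h

theorem tendsto_integral_mul_comp_sub_cocompact (hφi : Integrable φ) (hφ : ∀ x, |φ x| ≤ M)
    (hFi : Integrable F) {N : ℝ} (hF : ∀ x, |F x| ≤ N) :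
    Tendsto (fun y => ∫ x, φ x * F (x - y)) (cocompact ℝ) (𝓝 0) := by
  set tail : (ℝ → ℝ) → ℝ → ℝ := fun g r => ∫ x, {x | r ≤ |x|}.indicator (fun x => |g x|) x
  have hbound (y : ℝ) : |∫ x, φ x * F (x - y)| ≤ N * tail φ (|y| / 2) + M * tail F (|y| / 2) := by
    set r := |y| / 2 with hr
    have hS : MeasurableSet {x : ℝ | r ≤ |x|} := measurableSet_le measurable_const measurable_abs
    have hM : 0 ≤ M := (abs_nonneg _).trans (hφ 0)
    have hN : 0 ≤ N := (abs_nonneg _).trans (hF 0)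
    -- `|y| ≤ |x| + |x - y|`, so one of the two factors is evaluated in its tail
    have hpointwise (x : ℝ) : ‖φ x * F (x - y)‖ ≤ N * {x | r ≤ |x|}.indicator (fun x => |φ x|) x
        + M * {x | r ≤ |x|}.indicator (fun x => |F x|) (x - y) := by
      rw [Real.norm_eq_abs, abs_mul]
      by_cases hx : r ≤ |x|
      · rw [Set.indicator_of_mem (s := {x | r ≤ |x|}) hx, mul_comm N]
        exact le_add_of_le_of_nonneg (mul_le_mul_of_nonneg_left (hF _) (abs_nonneg _))
          (mul_nonneg hM (Set.indicator_nonneg (fun _ _ => abs_nonneg _) _))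
      · have hxy : r ≤ |x - y| := by
          have := abs_sub_abs_le_abs_sub y x
          rw [abs_sub_comm y x] at this
          linarith [not_le.1 hx]
        rw [Set.indicator_of_mem (s := {x | r ≤ |x|}) hxy]
        exact le_add_of_nonneg_of_le
          (mul_nonneg hN (Set.indicator_nonneg (fun _ _ => abs_nonneg _) _))
          (mul_le_mul_of_nonneg_right (hφ x) (abs_nonneg _))
    have hφtail := (hφi.abs.indicator hS).const_mul N
    have hFtail := ((hFi.abs.indicator hS).comp_sub_right y).const_mul M
    refine (norm_integral_le_of_norm_le (hφtail.add hFtail) (.of_forall hpointwise)).trans_eq ?_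
    rw [integral_add' hφtail hFtail, integral_const_mul, integral_const_mul,
      integral_sub_right_eq_self (fun u => {x | r ≤ |x|}.indicator (fun x => |F x|) u)]
  have htail :
      Tendsto (fun y => N * tail φ (|y| / 2) + M * tail F (|y| / 2)) (cocompact ℝ) (𝓝 0) := by
    have h := (tendsto_norm_cocompact_atTop (E := ℝ)).atTop_div_const (r := (2 : ℝ)) two_pos
    simpa using ((tendsto_integral_indicator_le_abs hφi).comp h).const_mul N |>.add
      (((tendsto_integral_indicator_le_abs hFi).comp h).const_mul M)
  exact squeeze_zero_norm hbound htail

end Convolution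

theorem lintegral_sq_sint_comp_sub_le {ν : SignedMeasure ℝ} {F : ℝ → ℝ}
    (hF : ∀ x, F x = ν (Set.Iio x)) (hFi : Integrable F) {μ : SignedMeasure ℝ}
    (hμ : tvNorm μ ≤ 1) :
    ∫⁻ x, ENNReal.ofReal ((sint μ fun y => F (x - y)) ^ 2) ≤
      ENNReal.ofReal (tvNorm ν * ((∫ x, |F x|) + tvNorm ν) * blNorm μ) := by
  set M := tvNorm ν
  have hM : 0 ≤ M := tvNorm_nonneg ν
  have hFm := measurable_of_eq_apply_Iio hF
  have hFb := abs_le_tvNorm_of_eq_apply_Iio hF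
  set φ := fun x => sint μ fun y => F (x - y)
  have hφi : Integrable φ := integrable_sint_comp_sub hFm hFi μ
  have hφb (x : ℝ) : |φ x| ≤ M :=
    (abs_sint_le μ fun y => hFb (x - y)).trans (mul_le_of_le_one_right hM hμ)
  set G := fun y => ∫ x, φ x * F (x - y)
  have hGb (y : ℝ) : |G y| ≤ M * ∫ x, |F x| :=
    (abs_integral_mul_le hφb (hFi.comp_sub_right y)).trans_eq
      (by rw [integral_sub_right_eq_self (fun u => |F u|)])
  have hGlip : LipschitzWith (M * M).toNNReal G := .of_dist_le' fun y z => by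
    have hsub : G y - G z = ∫ x, φ x * (F (x - y) - F (x - z)) := by
      simp only [G, mul_sub]
      exact (integral_sub ((hFi.comp_sub_right y).bdd_mul hφi.aestronglyMeasurable (.of_forall hφb))
        ((hFi.comp_sub_right z).bdd_mul hφi.aestronglyMeasurable (.of_forall hφb))).symm
    rw [Real.dist_eq, Real.dist_eq, hsub, mul_assoc, abs_sub_comm y z]
    exact (abs_integral_mul_le hφb ((hFi.comp_sub_right y).sub (hFi.comp_sub_right z))).trans
      (mul_le_mul_of_nonneg_left (integral_abs_sub_comp_sub_le hF hFi y z) hM)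
  have hG0 := tendsto_integral_mul_comp_sub_cocompact hφi hφb hFi hFb
  have hφsq : ∫ x, φ x ^ 2 = sint μ G := by
    simpa only [sq] using integral_mul_sint_comp_sub hφi.aestronglyMeasurable hφb hFm hFi μ
  have hφsqi : Integrable fun x => φ x ^ 2 := by
    simpa only [sq] using hφi.bdd_mul hφi.aestronglyMeasurable (.of_forall hφb)
  rw [← ofReal_integral_eq_lintegral_ofReal hφsqi (.of_forall fun x => sq_nonneg _), hφsq]
  refine ENNReal.ofReal_le_ofReal ?_
  refine (sint_le_mul_blNorm_of_lipschitzWith μ hGlip hG0 hGb).trans_eq ?_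
  rw [Real.coe_toNNReal _ (mul_nonneg hM hM)]
  ring

/-- for left-continuous integrable BV functions `Fₖ(x) = νₖ((−∞,x))`,
`L = ∑ₖ ‖νₖ‖(‖Fₖ‖_{L¹} + ‖νₖ‖)`, and any finite signed measure `μ` with `‖μ‖ ≤ 1`:
`∑ₖ ∫ (Fₖ*μ)(x)² dx ≤ L ‖μ‖_BL`. -/
theorem statement7 (n : ℕ) (ν : Fin (n + 1) → MeasureTheory.SignedMeasure ℝ)
    (F : Fin (n + 1) → ℝ → ℝ)
    (hF : ∀ k, ∀ x : ℝ, F k x = ν k (Set.Iio x))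
    (hFint : ∀ k, Integrable (F k) volume)
    (μ : MeasureTheory.SignedMeasure ℝ) (hμ : tvNorm μ ≤ 1) :
    ∑ k, ∫⁻ x : ℝ, ENNReal.ofReal ((sint μ fun y => F k (x - y)) ^ 2) ≤
      ENNReal.ofReal ((∑ k, tvNorm (ν k) * ((∫ x : ℝ, |F k x|) + tvNorm (ν k))) * blNorm μ) := by
  have hnonneg (k : Fin (n + 1)) :
      0 ≤ tvNorm (ν k) * ((∫ x : ℝ, |F k x|) + tvNorm (ν k)) * blNorm μ :=
    mul_nonneg (mul_nonneg (tvNorm_nonneg _)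
      (add_nonneg (integral_nonneg fun _ => abs_nonneg _) (tvNorm_nonneg _))) (blNorm_nonneg μ)
  rw [Finset.sum_mul, ENNReal.ofReal_sum_of_nonneg fun k _ => hnonneg k]
  exact Finset.sum_le_sum fun k _ => lintegral_sq_sint_comp_sub_le (hF k) (hFint k) hμ
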